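/- arXiv:1202.5530 — 2 statements merged into one kernel-verified Lean document; each statement's English description precedes it below -/
import Mathlib

section
/- Let W be a bounded complex of finite-dimensional vector spaces in degrees 0 through n, with w_i = dim W^i and h_i = dim H^i(W). Let r, s ∈ ℕ^{n+1} with s ≤ r componentwise, r ≤ w, s ≤ h. Then there exists a subcomplex L ⊆ W with dim L^i = r_i and dim H^i(L) = s_i for all i if and only if 0 ≤ χ_i(r-s) ≤ χ_i(w-h) for all 0 ≤ i ≤ n, where χ_i(t) = Σ_{j=0}^i (-1)^{i-j} t_j. -/
/-!
Write `Z^i = ker δ^i` and `ρ_i = dim δ(L^i)`. Rank–nullity on `L^i` gives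
`dim L^i - dim H^i(L) = ρ_i + ρ_{i-1}`, so `χ_i(r - s) = ρ_i`; applied to `L = W` it gives
`χ_i(w - h) = rank δ^i`. Necessity follows from `δ(L^i) ⊆ im δ^i`.

Conversely, with `ρ_i := χ_i(r - s) ∈ [0, rank δ^i]` (forced to vanish beyond `n`), build `L`
degree by degree: `δ(L^{i-1})` is a `ρ_{i-1}`-dimensional subspace of `Z^i`; enlarge it inside `Z^i`
to dimension `s_i + ρ_{i-1} ≤ h_i + rank δ^{i-1} = dim Z^i`, then add a `ρ_i`-dimensional subspace
of a complement of `Z^i`.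
-/

open Module

def partialEulerChar (t : ℕ → ℤ) (i : ℕ) : ℤ :=
  ∑ j ∈ Finset.range (i + 1), (-1) ^ (i - j) * t j

namespace partialEulerChar

variable (t : ℕ → ℤ)

@[simp]
theorem zero : partialEulerChar t 0 = t 0 := by
  simp [partialEulerChar]

theorem succ (i : ℕ) : partialEulerChar t (i + 1) = t (i + 1) - partialEulerChar t i := by
  have hsign : ∀ j ∈ Finset.range (i + 1),
      (-1 : ℤ) ^ (i + 1 - j) * t j = -((-1) ^ (i - j) * t j) := by
    intro j hj
    rw [Nat.sub_add_comm (Finset.mem_range_succ_iff.mp hj), pow_succ]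
    ring
  rw [partialEulerChar, Finset.sum_range_succ, Finset.sum_congr rfl hsign, Finset.sum_neg_distrib,
    Nat.sub_self, pow_zero, one_mul, partialEulerChar]
  ring

theorem eq_of_add {x : ℕ → ℤ} (h0 : t 0 = x 0) (hsucc : ∀ i, t (i + 1) = x (i + 1) + x i) :
    partialEulerChar t = x := by
  funext i
  induction i with
  | zero => simpa using h0
  | succ i ih => rw [succ, ih, hsucc]; ring

theorem eq_zero_of_le {n : ℕ} (ht : ∀ i, n < i → t i = 0) (hn : partialEulerChar t n = 0)
    {i : ℕ} (hi : n ≤ i) : partialEulerChar t i = 0 := by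
  induction i, hi using Nat.le_induction with
  | base => exact hn
  | succ i hi ih => rw [succ, ih, ht (i + 1) (by omega), sub_zero]

end partialEulerChar

section LinearAlgebra

variable {K V V₂ : Type*} [DivisionRing K] [AddCommGroup V] [Module K V] [FiniteDimensional K V]
  [AddCommGroup V₂] [Module K V₂]

theorem Submodule.finrank_map_add_finrank_ker_inf (f : V →ₗ[K] V₂) (p : Submodule K V) :
    finrank K (p.map f) + finrank K (LinearMap.ker f ⊓ p : Submodule K V) = finrank K p := by
  have h := (f.domRestrict p).finrank_range_add_finrank_ker
  rw [LinearMap.range_domRestrict, LinearMap.ker_domRestrict] at h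
  rw [← h, ← (Submodule.comapSubtypeEquivOfLe (inf_le_right : LinearMap.ker f ⊓ p ≤ p)).finrank_eq,
    Submodule.comap_inf, Submodule.comap_subtype_self, inf_top_eq]

theorem Submodule.exists_le_le_finrank_eq {B q : Submodule K V} (hBq : B ≤ q) {d : ℕ}
    (hBd : finrank K B ≤ d) (hdq : d ≤ finrank K q) :
    ∃ p : Submodule K V, B ≤ p ∧ p ≤ q ∧ finrank K p = d := by
  induction d, hBd using Nat.le_induction with
  | base => exact ⟨B, le_rfl, hBq, rfl⟩
  | succ d hd ih =>
    obtain ⟨p, hBp, hpq, hp⟩ := ih (by omega)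
    obtain ⟨x, hxq, hxp⟩ : ∃ x ∈ q, x ∉ p :=
      Set.not_subset.mp fun hqp => by
        have := Submodule.finrank_mono (show q ≤ p from hqp); omega
    have hx0 : x ≠ 0 := fun hx => hxp (hx ▸ p.zero_mem)
    refine ⟨p ⊔ K ∙ x, le_sup_of_le_left hBp,
      sup_le hpq ((Submodule.span_singleton_le_iff_mem x q).2 hxq), ?_⟩
    have hdisj : p ⊓ K ∙ x = ⊥ := ((Submodule.disjoint_span_singleton' hx0).mpr hxp).eq_bot
    have := Submodule.finrank_sup_add_finrank_inf_eq p (K ∙ x)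
    rw [hdisj, finrank_bot, finrank_span_singleton hx0] at this
    omega

theorem LinearMap.exists_le_finrank_map_finrank_ker_inf (f : V →ₗ[K] V₂) {B : Submodule K V}
    (hB : B ≤ LinearMap.ker f) {a c : ℕ} (hBa : finrank K B ≤ a)
    (ha : a ≤ finrank K (LinearMap.ker f)) (hc : c ≤ finrank K (LinearMap.range f)) :
    ∃ L : Submodule K V, B ≤ L ∧ finrank K (L.map f) = c ∧
      finrank K (LinearMap.ker f ⊓ L : Submodule K V) = a := by
  obtain ⟨P, hBP, hPker, hPa⟩ := Submodule.exists_le_le_finrank_eq hB hBa ha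
  obtain ⟨q, hq⟩ := (LinearMap.ker f).exists_isCompl
  have hPq : finrank K (P ⊔ q : Submodule K V) = a + finrank K (LinearMap.range f) := by
    have hPq := Submodule.finrank_sup_add_finrank_inf_eq P q
    have hcompl := Submodule.finrank_add_eq_of_isCompl hq
    have := f.finrank_range_add_finrank_ker
    rw [eq_bot_iff.mpr ((inf_le_inf_right q hPker).trans hq.inf_eq_bot.le), finrank_bot] at hPq
    omega
  obtain ⟨L, hPL, hLPq, hL⟩ := Submodule.exists_le_le_finrank_eq (le_sup_left : P ≤ P ⊔ q)
    (d := a + c) (by omega) (by omega)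
  have hkerL : LinearMap.ker f ⊓ L = P := by
    refine le_antisymm ?_ (le_inf hPker hPL)
    calc LinearMap.ker f ⊓ L ≤ (P ⊔ q) ⊓ LinearMap.ker f :=
          le_inf (inf_le_right.trans hLPq) inf_le_left
      _ = P := by rw [sup_inf_assoc_of_le q hPker, inf_comm, hq.inf_eq_bot, sup_bot_eq]
  refine ⟨L, hBP.trans hPL, ?_, hkerL ▸ hPa⟩
  have := Submodule.finrank_map_add_finrank_ker_inf f L
  rw [hkerL] at this
  omega

end LinearAlgebra

theorem Nat.exists_seq_of_forall_exists {α : ℕ → Type*} (P : ∀ i, α i → Prop)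
    (R : ∀ i, α i → α (i + 1) → Prop) (h0 : ∃ x, P 0 x)
    (hsucc : ∀ i x, P i x → ∃ y, P (i + 1) y ∧ R i x y) :
    ∃ f : ∀ i, α i, ∀ i, P i (f i) ∧ R i (f i) (f (i + 1)) := by
  obtain ⟨x₀, hx₀⟩ := h0
  choose g hgP hgR using hsucc
  let f : ∀ i, {x : α i // P i x} := fun i => Nat.rec ⟨x₀, hx₀⟩ (fun i x => ⟨_, hgP i x.1 x.2⟩) i
  exact ⟨fun i => (f i).1, fun i => ⟨(f i).2, hgR i _ (f i).2⟩⟩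

section Subcomplex

open LinearMap

variable {K : Type*} [DivisionRing K] {W : ℕ → Type*} [∀ i, AddCommGroup (W i)]
  [∀ i, Module K (W i)] (δ : ∀ i, W i →ₗ[K] W (i + 1))

theorem partialEulerChar_nonneg_and_le_finrank_range {n : ℕ}
    (hW : ∀ i, n < i → Subsingleton (W i)) {t : ℕ → ℤ} (ht : ∀ i, n < i → t i = 0)
    (hχ : ∀ i ≤ n, 0 ≤ partialEulerChar t i ∧ partialEulerChar t i ≤ finrank K (range (δ i)))
    (i : ℕ) : 0 ≤ partialEulerChar t i ∧ partialEulerChar t i ≤ finrank K (range (δ i)) := by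
  rcases le_or_gt i n with hi | hi
  · exact hχ i hi
  have : Subsingleton (W (n + 1)) := hW (n + 1) n.lt_succ_self
  have hn : partialEulerChar t n = 0 := by
    have := hχ n le_rfl
    rw [finrank_zero_of_subsingleton (M := range (δ n))] at this
    omega
  rw [partialEulerChar.eq_zero_of_le t ht hn hi.le]
  exact ⟨le_rfl, Int.natCast_nonneg _⟩

variable [∀ i, FiniteDimensional K (W i)]

theorem partialEulerChar_finrank_sub_eq_finrank_map (L : ∀ i, Submodule K (W i)) (s : ℕ → ℕ)
    (h0 : finrank K (ker (δ 0) ⊓ L 0 : Submodule K (W 0)) = s 0)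
    (hsucc : ∀ i, s (i + 1) + finrank K ((L i).map (δ i)) =
      finrank K (ker (δ (i + 1)) ⊓ L (i + 1) : Submodule K (W (i + 1))))
    (i : ℕ) :
    partialEulerChar (fun j => (finrank K (L j) : ℤ) - s j) i = finrank K ((L i).map (δ i)) := by
  refine congrFun (partialEulerChar.eq_of_add (x := fun i => (finrank K ((L i).map (δ i)) : ℤ))
    _ ?_ fun i => ?_) i
  · have := Submodule.finrank_map_add_finrank_ker_inf (δ 0) (L 0)
    omega
  · have := Submodule.finrank_map_add_finrank_ker_inf (δ (i + 1)) (L (i + 1))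
    have := hsucc i
    omega

theorem partialEulerChar_finrank_sub_eq_finrank_range (h : ℕ → ℕ)
    (h0 : h 0 = finrank K (ker (δ 0)))
    (hsucc : ∀ i, h (i + 1) + finrank K (range (δ i)) = finrank K (ker (δ (i + 1)))) (i : ℕ) :
    partialEulerChar (fun j => (finrank K (W j) : ℤ) - h j) i = finrank K (range (δ i)) := by
  rw [← Submodule.map_top]
  simpa using partialEulerChar_finrank_sub_eq_finrank_map δ (fun i => (⊤ : Submodule K (W i))) h
    (by rw [inf_top_eq]; exact h0.symm)
    (fun i => by rw [Submodule.map_top, inf_top_eq]; exact hsucc i) i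

theorem exists_subcomplex_finrank_map_finrank_ker_inf (hδ : ∀ i, (δ (i + 1)).comp (δ i) = 0)
    (ρ a : ℕ → ℕ) (hρ : ∀ i, ρ i ≤ finrank K (range (δ i)))
    (ha : ∀ i, a i ≤ finrank K (ker (δ i))) (hρa : ∀ i, ρ i ≤ a (i + 1)) :
    ∃ L : ∀ i, Submodule K (W i), ∀ i,
      (finrank K ((L i).map (δ i)) = ρ i ∧ finrank K (ker (δ i) ⊓ L i : Submodule K (W i)) = a i)
        ∧ (L i).map (δ i) ≤ L (i + 1) := by
  refine Nat.exists_seq_of_forall_exists (fun i (L : Submodule K (W i)) =>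
    finrank K (L.map (δ i)) = ρ i ∧ finrank K (ker (δ i) ⊓ L : Submodule K (W i)) = a i)
    (fun i L L' => L.map (δ i) ≤ L') ?_ fun i L ⟨hLρ, _⟩ => ?_
  · obtain ⟨L, -, hL⟩ := (δ 0).exists_le_finrank_map_finrank_ker_inf bot_le
      (by simp) (ha 0) (hρ 0)
    exact ⟨L, hL⟩
  · have hmap : L.map (δ i) ≤ ker (δ (i + 1)) :=
      map_le_range.trans (range_le_ker_iff.mpr (hδ i))
    obtain ⟨L', hLL', hL'⟩ := (δ (i + 1)).exists_le_finrank_map_finrank_ker_inf hmap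
      (hLρ ▸ hρa i) (ha _) (hρ _)
    exact ⟨L', hL', hLL'⟩

theorem exists_subcomplex_of_partialEulerChar (hδ : ∀ i, (δ (i + 1)).comp (δ i) = 0)
    (r s ρ : ℕ → ℕ) (hρ : ∀ i, (ρ i : ℤ) = partialEulerChar (fun j => (r j : ℤ) - s j) i)
    (hρrange : ∀ i, ρ i ≤ finrank K (range (δ i)))
    (hs0 : s 0 ≤ finrank K (ker (δ 0))) (hs : ∀ i, s (i + 1) + ρ i ≤ finrank K (ker (δ (i + 1)))) :
    ∃ L : ∀ i, Submodule K (W i),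
        (∀ i, (L i).map (δ i) ≤ L (i + 1)) ∧
        (∀ i, finrank K (L i) = r i) ∧
        finrank K (ker (δ 0) ⊓ L 0 : Submodule K (W 0)) = s 0 ∧
        (∀ i, s (i + 1) + finrank K ((L i).map (δ i)) =
          finrank K (ker (δ (i + 1)) ⊓ L (i + 1) : Submodule K (W (i + 1)))) := by
  -- the cycles of `L^i` are its cohomology plus the incoming boundaries `δ(L^{i-1})`
  obtain ⟨L, hL⟩ := exists_subcomplex_finrank_map_finrank_ker_inf δ hδ ρ
    (fun | 0 => s 0 | i + 1 => s (i + 1) + ρ i) hρrange (fun | 0 => hs0 | i + 1 => hs i)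
    (fun i => Nat.le_add_left _ _)
  refine ⟨L, fun i => (hL i).2, fun i => ?_, (hL 0).1.2,
    fun i => by rw [(hL i).1.1, (hL (i + 1)).1.2]⟩
  have hL_rank := Submodule.finrank_map_add_finrank_ker_inf (δ i) (L i)
  rw [(hL i).1.1, (hL i).1.2] at hL_rank
  cases i with
  | zero =>
    have hρ0 := hρ 0
    rw [partialEulerChar.zero] at hρ0
    dsimp only at hL_rank hρ0
    omega
  | succ i =>
    have hρi := hρ (i + 1)
    rw [partialEulerChar.succ, ← hρ i] at hρi
    dsimp only at hL_rank hρi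
    omega

end Subcomplex

theorem subcomplex_exists_iff_general (n : ℕ) (W : ℕ → Type)
    [∀ i, AddCommGroup (W i)] [∀ i, Module ℂ (W i)] [∀ i, FiniteDimensional ℂ (W i)]
    (hW : ∀ i, n < i → Subsingleton (W i))
    (δ : ∀ i, W i →ₗ[ℂ] W (i + 1))
    (hδ : ∀ i, (δ (i + 1)).comp (δ i) = 0)
    (h : ℕ → ℕ)
    (hh0 : h 0 = finrank ℂ (LinearMap.ker (δ 0)))
    (hhs : ∀ i, h (i + 1) + finrank ℂ (LinearMap.range (δ i)) =
      finrank ℂ (LinearMap.ker (δ (i + 1))))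
    (r s : ℕ → ℕ)
    (hsh : ∀ i, s i ≤ h i)
    (hrtail : ∀ i, n < i → r i = 0) (hstail : ∀ i, n < i → s i = 0) :
    (∃ L : ∀ i, Submodule ℂ (W i),
        (∀ i, (L i).map (δ i) ≤ L (i + 1)) ∧
        (∀ i, finrank ℂ (L i) = r i) ∧
        finrank ℂ (LinearMap.ker (δ 0) ⊓ L 0 : Submodule ℂ (W 0)) = s 0 ∧
        (∀ i, s (i + 1) + finrank ℂ ((L i).map (δ i)) =
          finrank ℂ (LinearMap.ker (δ (i + 1)) ⊓ L (i + 1) : Submodule ℂ (W (i + 1))))) ↔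
      ∀ i ≤ n,
        0 ≤ ∑ j ∈ Finset.range (i + 1), (-1) ^ (i - j) * ((r j : ℤ) - (s j : ℤ)) ∧
        ∑ j ∈ Finset.range (i + 1), (-1) ^ (i - j) * ((r j : ℤ) - (s j : ℤ)) ≤
          ∑ j ∈ Finset.range (i + 1), (-1) ^ (i - j) * ((finrank ℂ (W j) : ℤ) - (h j : ℤ)) := by
  have hχW := partialEulerChar_finrank_sub_eq_finrank_range δ h hh0 hhs
  set χ := partialEulerChar (fun j => (r j : ℤ) - s j)
  constructor
  · rintro ⟨L, -, hLr, hk0, hks⟩ i -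
    have hχL : χ i = finrank ℂ ((L i).map (δ i)) := by
      simpa only [hLr] using partialEulerChar_finrank_sub_eq_finrank_map δ L s hk0 hks i
    show 0 ≤ χ i ∧ χ i ≤ partialEulerChar _ i
    rw [hχL, hχW]
    exact ⟨Int.natCast_nonneg _, by exact_mod_cast Submodule.finrank_mono LinearMap.map_le_range⟩
  · intro hχ
    have hχ_bounds : ∀ i, 0 ≤ χ i ∧ χ i ≤ finrank ℂ (LinearMap.range (δ i)) :=
      partialEulerChar_nonneg_and_le_finrank_range δ hW
        (fun j hj => by simp [hrtail j hj, hstail j hj]) fun i hi => hχW i ▸ hχ i hi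
    refine exists_subcomplex_of_partialEulerChar δ hδ r s (fun i => (χ i).toNat)
      (fun i => Int.toNat_of_nonneg (hχ_bounds i).1) (fun i => by have := hχ_bounds i; omega)
      (hh0 ▸ hsh 0) fun i => ?_
    have := hχ_bounds i
    have := hsh (i + 1)
    have := hhs i
    omega

/-- Proposition 8: existence of a subcomplex `L ⊆ W` with `dim L = r` and `dim H(L) = s`
if and only if `0 ≤ χ_i(r - s) ≤ χ_i(w - h)` for all `0 ≤ i ≤ n`. -/
theorem subcomplex_exists_iff (n : ℕ) (W : ℕ → Type)
    [∀ i, AddCommGroup (W i)] [∀ i, Module ℂ (W i)] [∀ i, FiniteDimensional ℂ (W i)]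
    (hW : ∀ i, n < i → Subsingleton (W i))
    (δ : ∀ i, W i →ₗ[ℂ] W (i + 1))
    (hδ : ∀ i, (δ (i + 1)).comp (δ i) = 0)
    (h : ℕ → ℕ)
    (hh0 : h 0 = finrank ℂ (LinearMap.ker (δ 0)))
    (hhs : ∀ i, h (i + 1) + finrank ℂ (LinearMap.range (δ i)) =
      finrank ℂ (LinearMap.ker (δ (i + 1))))
    (r s : ℕ → ℕ)
    (hsr : ∀ i, s i ≤ r i) (hrw : ∀ i, r i ≤ finrank ℂ (W i)) (hsh : ∀ i, s i ≤ h i)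
    (hrtail : ∀ i, n < i → r i = 0) (hstail : ∀ i, n < i → s i = 0) :
    (∃ L : ∀ i, Submodule ℂ (W i),
        (∀ i, (L i).map (δ i) ≤ L (i + 1)) ∧
        (∀ i, finrank ℂ (L i) = r i) ∧
        finrank ℂ (LinearMap.ker (δ 0) ⊓ L 0 : Submodule ℂ (W 0)) = s 0 ∧
        (∀ i, s (i + 1) + finrank ℂ ((L i).map (δ i)) =
          finrank ℂ (LinearMap.ker (δ (i + 1)) ⊓ L (i + 1) : Submodule ℂ (W (i + 1))))) ↔
      ∀ i ≤ n,
        0 ≤ ∑ j ∈ Finset.range (i + 1), (-1) ^ (i - j) * ((r j : ℤ) - (s j : ℤ)) ∧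
        ∑ j ∈ Finset.range (i + 1), (-1) ^ (i - j) * ((r j : ℤ) - (s j : ℤ)) ≤
          ∑ j ∈ Finset.range (i + 1), (-1) ^ (i - j) * ((finrank ℂ (W j) : ℤ) - (h j : ℤ)) :=
  subcomplex_exists_iff_general n W hW δ hδ h hh0 hhs r s hsh hrtail hstail
end

section
/- Let V = ⊕_{i=0}^n V^i be a graded finite-dimensional vector space with v_i = dim V^i, and let r ∈ ℕ^{n+1} with r_i ≤ v_{i+1} for all i (where v_{n+1} = 0 forces r_n = 0). Then there exists a family of linear maps d^i : V^i → V^{i+1} with d^{i+1} d^i = 0 and rk(d^i) = r_i for all i, if and only if r_i + r_{i-1} ≤ v_i for all i (with r_{-1} = 0). Moreover for any such d, dim H^i(V,d) = v_i - r_i - r_{i-1}. -/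
/-!
The ranks are forced by rank–nullity: `d^{i+1} d^i = 0` means `im d^i ⊆ ker d^{i+1}`, so
`r_i + r_{i+1} ≤ v_{i+1}`, and `dim H^{i+1} = (v_{i+1} - r_{i+1}) - r_i`. Conversely, the
differential is built degree by degree: once `d^i` is chosen, `d^{i+1}` is any map of rank
`r_{i+1}` that factors through `V^{i+1} / im d^i`, a space of dimension `v_{i+1} - r_i ≥ r_{i+1}`.
-/

open Module LinearMap

section RankLemmas

variable {K W₁ W₂ W₃ : Type*} [Field K] [AddCommGroup W₁] [Module K W₁]
  [AddCommGroup W₂] [Module K W₂] [AddCommGroup W₃] [Module K W₃]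

theorem finrank_range_add_finrank_range_le_of_comp_eq_zero [FiniteDimensional K W₂]
    {f : W₁ →ₗ[K] W₂} {g : W₂ →ₗ[K] W₃} (hgf : g ∘ₗ f = 0) :
    finrank K (range f) + finrank K (range g) ≤ finrank K W₂ := by
  have hle : finrank K (range f) ≤ finrank K (ker g) :=
    Submodule.finrank_mono (range_le_ker_iff.mpr hgf)
  have := finrank_range_add_finrank_ker g
  omega

/-- The map is `W₁ → W₁ ⧸ S ≃ K^m → K^r ↪ W₂`: restriction of coordinates, then an
independent family of `r` vectors. -/
theorem exists_linearMap_le_ker_finrank_range_eq [FiniteDimensional K W₁]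
    [FiniteDimensional K W₂] (S : Submodule K W₁) {r : ℕ}
    (h₁ : r + finrank K S ≤ finrank K W₁) (h₂ : r ≤ finrank K W₂) :
    ∃ f : W₁ →ₗ[K] W₂, S ≤ ker f ∧ finrank K (range f) = r := by
  obtain ⟨v, hv⟩ := exists_linearIndependent_of_le_finrank h₂
  have hq : r ≤ finrank K (W₁ ⧸ S) := by
    have := S.finrank_quotient_add_finrank
    omega
  let b := Module.finBasis K (W₁ ⧸ S)
  let p : (W₁ ⧸ S) →ₗ[K] (Fin r → K) :=
    funLeft K K (Fin.castLE hq) ∘ₗ b.equivFun.toLinearMap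
  have hp : range p = ⊤ := range_eq_top.mpr <|
    (funLeft_surjective_of_injective K K _ (Fin.castLE_injective hq)).comp
      b.equivFun.surjective
  refine ⟨Fintype.linearCombination K v ∘ₗ p ∘ₗ S.mkQ, ?_, ?_⟩
  · calc S = ker S.mkQ := S.ker_mkQ.symm
      _ ≤ _ := ker_le_ker_comp S.mkQ (Fintype.linearCombination K v ∘ₗ p)
  · rw [range_comp_of_range_eq_top _ ((range_comp_of_range_eq_top p S.range_mkQ).trans hp),
      finrank_range_of_inj hv.fintypeLinearCombination_injective, finrank_fin_fun]

end RankLemmas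

section Construction

variable {K : Type*} [Field K] (V : ℕ → Type*) [∀ i, AddCommGroup (V i)]
  [∀ i, Module K (V i)] [∀ i, FiniteDimensional K (V i)] (r : ℕ → ℕ)

noncomputable def differentialOfRanks (hr : ∀ i, r i ≤ finrank K (V (i + 1)))
    (h₀ : r 0 ≤ finrank K (V 0)) (hs : ∀ i, r (i + 1) + r i ≤ finrank K (V (i + 1))) :
    ∀ i, {f : V i →ₗ[K] V (i + 1) // finrank K (range f) = r i}
  | 0 =>
    have h := exists_linearMap_le_ker_finrank_range_eq (⊥ : Submodule K (V 0))
      (by simpa using h₀) (hr 0)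
    ⟨h.choose, h.choose_spec.2⟩
  | i + 1 =>
    have h := exists_linearMap_le_ker_finrank_range_eq (range (differentialOfRanks hr h₀ hs i).1)
      (by rw [(differentialOfRanks hr h₀ hs i).2]; exact hs i) (hr (i + 1))
    ⟨h.choose, h.choose_spec.2⟩

theorem differentialOfRanks_comp (hr : ∀ i, r i ≤ finrank K (V (i + 1)))
    (h₀ : r 0 ≤ finrank K (V 0)) (hs : ∀ i, r (i + 1) + r i ≤ finrank K (V (i + 1))) (i : ℕ) :
    (differentialOfRanks V r hr h₀ hs (i + 1)).1 ∘ₗ (differentialOfRanks V r hr h₀ hs i).1 = 0 :=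
  range_le_ker_iff.mp (exists_linearMap_le_ker_finrank_range_eq
    (range (differentialOfRanks V r hr h₀ hs i).1)
    (by rw [(differentialOfRanks V r hr h₀ hs i).2]; exact hs i) (hr (i + 1))).choose_spec.1

end Construction

theorem differential_of_rank_exists_iff_general (V : ℕ → Type)
    [∀ i, AddCommGroup (V i)] [∀ i, Module ℂ (V i)] [∀ i, FiniteDimensional ℂ (V i)]
    (r : ℕ → ℕ)
    (hr : ∀ i, r i ≤ finrank ℂ (V (i + 1))) :
    ((∃ d : ∀ i, V i →ₗ[ℂ] V (i + 1),
        (∀ i, (d (i + 1)).comp (d i) = 0) ∧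
        (∀ i, finrank ℂ (LinearMap.range (d i)) = r i)) ↔
      (r 0 ≤ finrank ℂ (V 0) ∧ ∀ i, r (i + 1) + r i ≤ finrank ℂ (V (i + 1)))) ∧
    ∀ d : ∀ i, V i →ₗ[ℂ] V (i + 1),
      (∀ i, (d (i + 1)).comp (d i) = 0) →
      (∀ i, finrank ℂ (LinearMap.range (d i)) = r i) →
      ((finrank ℂ (LinearMap.ker (d 0)) : ℤ) = (finrank ℂ (V 0) : ℤ) - (r 0 : ℤ) ∧
        ∀ i, (finrank ℂ (LinearMap.ker (d (i + 1))) : ℤ) -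
            (finrank ℂ (LinearMap.range (d i)) : ℤ) =
          (finrank ℂ (V (i + 1)) : ℤ) - (r (i + 1) : ℤ) - (r i : ℤ)) := by
  refine ⟨⟨?_, ?_⟩, fun d _ hrank => ⟨?_, fun i => ?_⟩⟩
  · rintro ⟨d, hcomp, hrank⟩
    refine ⟨hrank 0 ▸ (d 0).finrank_range_le, fun i => ?_⟩
    simpa only [hrank, add_comm (r i)] using
      finrank_range_add_finrank_range_le_of_comp_eq_zero (hcomp i)
  · rintro ⟨h₀, hs⟩
    exact ⟨fun i => (differentialOfRanks V r hr h₀ hs i).1, differentialOfRanks_comp V r hr h₀ hs,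
      fun i => (differentialOfRanks V r hr h₀ hs i).2⟩
  · have := finrank_range_add_finrank_ker (d 0)
    rw [hrank] at this
    omega
  · have := finrank_range_add_finrank_ker (d (i + 1))
    rw [hrank] at this ⊢
    omega

/-- Proposition 20: on a graded finite-dimensional space `V` in degrees `0..n` with
`r_i ≤ v_{i+1}`, a differential `d` with `d∘d = 0` and `rk(d^i) = r_i` exists iff
`r_i + r_{i-1} ≤ v_i` for all `i`; moreover any such `d` satisfies
`dim H^i(V,d) = v_i - r_i - r_{i-1}`. -/
theorem differential_of_rank_exists_iff (n : ℕ) (V : ℕ → Type)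
    [∀ i, AddCommGroup (V i)] [∀ i, Module ℂ (V i)] [∀ i, FiniteDimensional ℂ (V i)]
    (hV : ∀ i, n < i → Subsingleton (V i))
    (r : ℕ → ℕ)
    (hr : ∀ i, r i ≤ finrank ℂ (V (i + 1))) :
    ((∃ d : ∀ i, V i →ₗ[ℂ] V (i + 1),
        (∀ i, (d (i + 1)).comp (d i) = 0) ∧
        (∀ i, finrank ℂ (LinearMap.range (d i)) = r i)) ↔
      (r 0 ≤ finrank ℂ (V 0) ∧ ∀ i, r (i + 1) + r i ≤ finrank ℂ (V (i + 1)))) ∧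
    ∀ d : ∀ i, V i →ₗ[ℂ] V (i + 1),
      (∀ i, (d (i + 1)).comp (d i) = 0) →
      (∀ i, finrank ℂ (LinearMap.range (d i)) = r i) →
      ((finrank ℂ (LinearMap.ker (d 0)) : ℤ) = (finrank ℂ (V 0) : ℤ) - (r 0 : ℤ) ∧
        ∀ i, (finrank ℂ (LinearMap.ker (d (i + 1))) : ℤ) -
            (finrank ℂ (LinearMap.range (d i)) : ℤ) =
          (finrank ℂ (V (i + 1)) : ℤ) - (r (i + 1) : ℤ) - (r i : ℤ)) :=
  differential_of_rank_exists_iff_general V r hr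
end
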